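/- arXiv:2503.03497 — 4 statements merged into one kernel-verified Lean document; each statement's English description precedes it below -/
import Mathlib

section
/- In the two-seller sequential-search demand system, the two sellers' bonuses coincide: B_i = B_j (the gain in demand from being searched first instead of second is the same for both sellers, for every price pair). -/
open MeasureTheory

/-- The CDF associated to density `f` supported on `[0,1]`. -/
noncomputable def cdf (f : ℝ → ℝ) (x : ℝ) : ℝ := ∫ u in (0:ℝ)..x, f u

/-!
Write `d = p_i - p_j`. After the substitution `u ↦ u - d` in the integral of `D_j¹` and
splitting the integration ranges at `A - d`, everything cancels except
`F(A) (F(A - d) - F(A + d))` and the two integrals of `F(u) f(u + d)` and `F(u + d) f(u)`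
over `[A - d, A]`. By the product rule the latter sum to `F(A) F(A + d) - F(A - d) F(A)`.
-/

theorem hasDerivAt_cdf {f : ℝ → ℝ} (hf : Continuous f) (x : ℝ) :
    HasDerivAt (cdf f) (f x) x :=
  intervalIntegral.integral_hasDerivAt_right (hf.intervalIntegrable _ _)
    (hf.stronglyMeasurableAtFilter _ _) hf.continuousAt

theorem integral_mul_shift_add_integral_shift_mul {F f : ℝ → ℝ}
    (hF : ∀ x, HasDerivAt F (f x) x) (hf : Continuous f) (a b d : ℝ) :
    (∫ u in a..b, F u * f (u + d)) + ∫ u in a..b, F (u + d) * f u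
      = F b * F (b + d) - F a * F (a + d) := by
  have hF_shift : ∀ x, HasDerivAt (fun u ↦ F (u + d)) (f (x + d)) x :=
    fun x ↦ (hF (x + d)).comp_add_const x d
  have parts := intervalIntegral.integral_mul_deriv_eq_deriv_mul (a := a) (b := b)
    (fun x _ ↦ hF x) (fun x _ ↦ hF_shift x) (hf.intervalIntegrable _ _)
    ((hf.comp (continuous_add_const d)).intervalIntegrable _ _)
  simp only [mul_comm (f _)] at parts
  linarith

theorem bonus_symmetric_general
    (f : ℝ → ℝ) (hf_cont : Continuous f)
    (A pi pj : ℝ) :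
    -- B_i = D_i¹ - D_i²  equals  B_j = D_j¹ - D_j²
    ((1 - cdf f (A + (pi - pj)) + ∫ u in pj..A, cdf f u * f (u + (pi - pj)))
        - ((1 - cdf f A) * cdf f (A - (pi - pj))
            + ∫ u in pj..(A - (pi - pj)), cdf f u * f (u + (pi - pj))))
      =
    ((1 - cdf f (A - (pi - pj)) + ∫ u in pi..A, cdf f u * f (u - (pi - pj)))
        - ((1 - cdf f A) * cdf f (A + (pi - pj))
            + ∫ u in pj..A, cdf f (u + (pi - pj)) * f u)) := by
  set d := pi - pj
  have hF := hasDerivAt_cdf hf_cont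
  have hF_cont : Continuous (cdf f) := continuous_iff_continuousAt.2 fun x ↦ (hF x).continuousAt
  have hI₁ : Continuous fun u ↦ cdf f u * f (u + d) :=
    hF_cont.mul (hf_cont.comp (continuous_add_const d))
  have hI₂ : Continuous fun u ↦ cdf f (u + d) * f u :=
    (hF_cont.comp (continuous_add_const d)).mul hf_cont
  have product_rule := integral_mul_shift_add_integral_shift_mul hF hf_cont (A - d) A d
  have shift : (∫ u in pi..A, cdf f u * f (u - d)) = ∫ u in pj..(A - d), cdf f (u + d) * f u := by
    rw [show pj = pi - d by ring,
      ← intervalIntegral.integral_comp_sub_right (fun u ↦ cdf f (u + d) * f u) d]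
    simp only [sub_add_cancel]
  have split₁ := intervalIntegral.integral_add_adjacent_intervals
    (hI₁.intervalIntegrable (μ := volume) pj (A - d)) (hI₁.intervalIntegrable (A - d) A)
  have split₂ := intervalIntegral.integral_add_adjacent_intervals
    (hI₂.intervalIntegrable (μ := volume) pj (A - d)) (hI₂.intervalIntegrable (A - d) A)
  rw [sub_add_cancel] at product_rule
  linear_combination product_rule - shift - split₁ - split₂

/-- In the two-seller sequential-search demand system, the two sellers' bonuses
coincide: `B_i = B_j` for every admissible price pair. -/
theorem bonus_symmetric
    (f : ℝ → ℝ) (hf_cont : Continuous f) (hf_nonneg : ∀ x, 0 ≤ f x)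
    (hf_supp : ∀ x, x < 0 ∨ 1 < x → f x = 0)
    (hf_total : (∫ u in (0:ℝ)..1, f u) = 1)
    (A pi pj : ℝ) (hpi : 0 ≤ pi) (hpj : 0 ≤ pj)
    (hpiA : pi ≤ A) (hpjA : pj ≤ A) (hA1 : A ≤ 1)
    (hgap : |pi - pj| ≤ 1 - A) :
    -- B_i = D_i¹ - D_i²  equals  B_j = D_j¹ - D_j²
    ((1 - cdf f (A + (pi - pj)) + ∫ u in pj..A, cdf f u * f (u + (pi - pj)))
        - ((1 - cdf f A) * cdf f (A - (pi - pj))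
            + ∫ u in pj..(A - (pi - pj)), cdf f u * f (u + (pi - pj))))
      =
    ((1 - cdf f (A - (pi - pj)) + ∫ u in pi..A, cdf f u * f (u - (pi - pj)))
        - ((1 - cdf f A) * cdf f (A + (pi - pj))
            + ∫ u in pj..A, cdf f (u + (pi - pj)) * f u)) :=
  bonus_symmetric_general f hf_cont A pi pj
end

section
/- In the two-seller sequential-search demand system, the bonus satisfies the identity B_i = (1 − F(A+Δp))·(1 − F(A−Δp)) + ∫_{A−Δp}^{A} (F(u) − F(A−Δp))·f(u+Δp) du, and consequently B_i ≥ 0. Moreover, if in addition f > 0 on the open interval (0,1) and A < 1, then B_i > 0. -/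
/-!
Writing `Δ = pi - pj` and `g u = F u * f (u + Δ)`, the two integrals in `B_i` telescope to
`∫_{A-Δ}^{A} g`, and since `∫_{A-Δ}^{A} f (u + Δ) du = F (A + Δ) - F A`, subtracting
`F (A - Δ)` inside the integrand turns `B_i` into the stated sum. Both summands are
nonnegative: the product because `A ± Δ ≤ 1`, the integral because `F` is monotone, whichever
way the interval is oriented. For the strict inequality, the product is `(1 - F A)² > 0` when
`Δ = 0`; otherwise the integrand is positive on the open interval between `A - Δ` and `A`,
which together with its shift by `Δ` lies in `(0,1)`.
-/

open MeasureTheory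

/-- Seller i's bonus `B_i = D_i¹ - D_i²` in the two-seller sequential-search
demand system with reservation value `A` and prices `pi, pj`. -/
noncomputable def bonusI (f : ℝ → ℝ) (A pi pj : ℝ) : ℝ :=
  (1 - cdf f (A + (pi - pj)) + ∫ u in pj..A, cdf f u * f (u + (pi - pj)))
    - ((1 - cdf f A) * cdf f (A - (pi - pj))
        + ∫ u in pj..(A - (pi - pj)), cdf f u * f (u + (pi - pj)))

open Set

section Cdf

variable {f : ℝ → ℝ}

theorem cdf_sub_cdf (hf : Continuous f) (a b : ℝ) : cdf f b - cdf f a = ∫ u in a..b, f u :=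
  intervalIntegral.integral_interval_sub_left (hf.intervalIntegrable _ _)
    (hf.intervalIntegrable _ _)

theorem continuous_cdf (hf : Continuous f) : Continuous (cdf f) :=
  intervalIntegral.continuous_primitive (fun _ _ => hf.intervalIntegrable _ _) 0

theorem monotone_cdf (hf : Continuous f) (hf_nonneg : ∀ x, 0 ≤ f x) : Monotone (cdf f) :=
  fun a b hab => sub_nonneg.1 <| by
    rw [cdf_sub_cdf hf]
    exact intervalIntegral.integral_nonneg hab fun u _ => hf_nonneg u

theorem cdf_le_one (hf : Continuous f) (hf_nonneg : ∀ x, 0 ≤ f x)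
    (hf_total : (∫ u in (0:ℝ)..1, f u) = 1) {x : ℝ} (hx : x ≤ 1) : cdf f x ≤ 1 :=
  hf_total ▸ monotone_cdf hf hf_nonneg hx

theorem strictMonoOn_cdf (hf : Continuous f) (hf_pos : ∀ x, 0 < x → x < 1 → 0 < f x) :
    StrictMonoOn (cdf f) (Icc 0 1) := fun a ha b hb hab => sub_pos.1 <| by
  rw [cdf_sub_cdf hf]
  exact intervalIntegral.intervalIntegral_pos_of_pos_on (hf.intervalIntegrable _ _)
    (fun u hu => hf_pos u (ha.1.trans_lt hu.1) (hu.2.trans_le hb.2)) hab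

end Cdf

section WeightedIntegral

variable {F g : ℝ → ℝ} {a b : ℝ}

theorem integral_sub_mul_symm :
    ∫ u in a..b, (F u - F a) * g u = ∫ u in b..a, (F a - F u) * g u := by
  rw [intervalIntegral.integral_symm, ← intervalIntegral.integral_neg]
  simp only [← neg_mul, neg_sub]

theorem integral_sub_mul_nonneg (hF : Monotone F) (hg : ∀ u, 0 ≤ g u) :
    0 ≤ ∫ u in a..b, (F u - F a) * g u := by
  rcases le_total a b with hab | hba
  · exact intervalIntegral.integral_nonneg hab fun u hu =>
      mul_nonneg (sub_nonneg.2 (hF hu.1)) (hg u)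
  · rw [integral_sub_mul_symm]
    exact intervalIntegral.integral_nonneg hba fun u hu =>
      mul_nonneg (sub_nonneg.2 (hF hu.2)) (hg u)

theorem integral_sub_mul_pos (hab : a ≠ b) (hF : Continuous F) (hg : Continuous g)
    (hF_strict : StrictMonoOn F (uIcc a b)) (hg_pos : ∀ u ∈ uIoo a b, 0 < g u) :
    0 < ∫ u in a..b, (F u - F a) * g u := by
  have hFa : Continuous fun u => F u - F a := hF.sub continuous_const
  have hFa' : Continuous fun u => F a - F u := continuous_const.sub hF
  rcases hab.lt_or_gt with hab | hba
  · refine intervalIntegral.intervalIntegral_pos_of_pos_on ((hFa.mul hg).intervalIntegrable _ _)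
      (fun u hu => mul_pos (sub_pos.2 ?_) (hg_pos u (mem_uIoo_of_lt hu.1 hu.2))) hab
    exact hF_strict left_mem_uIcc (uIoo_subset_uIcc_self (mem_uIoo_of_lt hu.1 hu.2)) hu.1
  · rw [integral_sub_mul_symm]
    refine intervalIntegral.intervalIntegral_pos_of_pos_on ((hFa'.mul hg).intervalIntegrable _ _)
      (fun u hu => mul_pos (sub_pos.2 ?_) (hg_pos u (mem_uIoo_of_gt hu.1 hu.2))) hba
    exact hF_strict (uIoo_subset_uIcc_self (mem_uIoo_of_gt hu.1 hu.2)) left_mem_uIcc hu.2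

end WeightedIntegral

theorem bonusI_eq {f : ℝ → ℝ} (hf : Continuous f) (A pi pj : ℝ) :
    bonusI f A pi pj
      = (1 - cdf f (A + (pi - pj))) * (1 - cdf f (A - (pi - pj)))
        + ∫ u in (A - (pi - pj))..A, (cdf f u - cdf f (A - (pi - pj))) * f (u + (pi - pj)) := by
  unfold bonusI
  set d := pi - pj
  have hshift : Continuous fun u => f (u + d) := hf.comp (continuous_add_const d)
  have hg : Continuous fun u => cdf f u * f (u + d) := (continuous_cdf hf).mul hshift
  have hsplit : ∫ u in pj..A, cdf f u * f (u + d)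
      = (∫ u in pj..(A - d), cdf f u * f (u + d)) + ∫ u in (A - d)..A, cdf f u * f (u + d) :=
    (intervalIntegral.integral_add_adjacent_intervals (hg.intervalIntegrable _ _)
      (hg.intervalIntegrable _ _)).symm
  have htranslate : ∫ u in (A - d)..A, f (u + d) = cdf f (A + d) - cdf f A := by
    rw [intervalIntegral.integral_comp_add_right, sub_add_cancel, cdf_sub_cdf hf]
  have hcenter : ∫ u in (A - d)..A, (cdf f u - cdf f (A - d)) * f (u + d)
      = (∫ u in (A - d)..A, cdf f u * f (u + d)) - cdf f (A - d) * (cdf f (A + d) - cdf f A) := by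
    rw [← htranslate, ← intervalIntegral.integral_const_mul,
      ← intervalIntegral.integral_sub (hg.intervalIntegrable _ _)
        ((hshift.intervalIntegrable _ _).const_mul _)]
    simp only [sub_mul]
  rw [hsplit, hcenter]
  ring

theorem bonus_identity_nonneg_general
    (f : ℝ → ℝ) (hf_cont : Continuous f) (hf_nonneg : ∀ x, 0 ≤ f x)
    (hf_total : (∫ u in (0:ℝ)..1, f u) = 1)
    (A pi pj : ℝ) (hpi : 0 ≤ pi) (hpj : 0 ≤ pj)
    (hpiA : pi ≤ A) (hpjA : pj ≤ A)
    (hgap : |pi - pj| ≤ 1 - A) :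
    bonusI f A pi pj
        = (1 - cdf f (A + (pi - pj))) * (1 - cdf f (A - (pi - pj)))
          + ∫ u in (A - (pi - pj))..A,
              (cdf f u - cdf f (A - (pi - pj))) * f (u + (pi - pj))
      ∧ 0 ≤ bonusI f A pi pj
      ∧ ((∀ x, 0 < x → x < 1 → 0 < f x) → A < 1 → 0 < bonusI f A pi pj) := by
  have hId := bonusI_eq hf_cont A pi pj
  set d := pi - pj
  obtain ⟨hd_lower, hd_upper⟩ := abs_le.1 hgap
  have hprod : 0 ≤ (1 - cdf f (A + d)) * (1 - cdf f (A - d)) :=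
    mul_nonneg (sub_nonneg.2 (cdf_le_one hf_cont hf_nonneg hf_total (by linarith)))
      (sub_nonneg.2 (cdf_le_one hf_cont hf_nonneg hf_total (by linarith)))
  have hint : 0 ≤ ∫ u in (A - d)..A, (cdf f u - cdf f (A - d)) * f (u + d) :=
    integral_sub_mul_nonneg (monotone_cdf hf_cont hf_nonneg) fun u => hf_nonneg (u + d)
  refine ⟨hId, hId ▸ add_nonneg hprod hint, fun hf_pos hA => ?_⟩
  have hF := strictMonoOn_cdf hf_cont hf_pos
  rw [hId]
  rcases eq_or_ne d 0 with hd | hd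
  · have hFA : cdf f A < 1 :=
      (hF ⟨by linarith, hA.le⟩ ⟨zero_le_one, le_rfl⟩ hA).trans_eq hf_total
    simp only [hd, add_zero, sub_zero, intervalIntegral.integral_same]
    exact mul_pos (sub_pos.2 hFA) (sub_pos.2 hFA)
  · refine add_pos_of_nonneg_of_pos hprod <| integral_sub_mul_pos (by simpa)
      (continuous_cdf hf_cont) (hf_cont.comp (continuous_add_const d))
      (hF.mono (uIcc_subset_Icc ⟨by linarith, by linarith⟩ ⟨by linarith, hA.le⟩)) ?_
    rintro u ⟨hu_lower, hu_upper⟩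
    rw [inf_lt_iff] at hu_lower
    rw [lt_sup_iff] at hu_upper
    apply hf_pos <;> rcases hu_lower with h | h <;> rcases hu_upper with h' | h' <;> linarith

/-- The bonus identity
`B_i = (1-F(A+Δp))(1-F(A-Δp)) + ∫_{A-Δp}^{A} (F(u)-F(A-Δp)) f(u+Δp) du`;
consequently `B_i ≥ 0`, and `B_i > 0` if moreover `f > 0` on `(0,1)` and `A < 1`. -/
theorem bonus_identity_nonneg
    (f : ℝ → ℝ) (hf_cont : Continuous f) (hf_nonneg : ∀ x, 0 ≤ f x)
    (hf_supp : ∀ x, x < 0 ∨ 1 < x → f x = 0)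
    (hf_total : (∫ u in (0:ℝ)..1, f u) = 1)
    (A pi pj : ℝ) (hpi : 0 ≤ pi) (hpj : 0 ≤ pj)
    (hpiA : pi ≤ A) (hpjA : pj ≤ A) (hA1 : A ≤ 1)
    (hgap : |pi - pj| ≤ 1 - A) :
    bonusI f A pi pj
        = (1 - cdf f (A + (pi - pj))) * (1 - cdf f (A - (pi - pj)))
          + ∫ u in (A - (pi - pj))..A,
              (cdf f u - cdf f (A - (pi - pj))) * f (u + (pi - pj))
      ∧ 0 ≤ bonusI f A pi pj
      ∧ ((∀ x, 0 < x → x < 1 → 0 < f x) → A < 1 → 0 < bonusI f A pi pj) :=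
  bonus_identity_nonneg_general f hf_cont hf_nonneg hf_total A pi pj hpi hpj hpiA hpjA hgap
end

section
/- Revelation principle for contracts: if (p1*, p2*) is a pure-strategy Nash equilibrium under the search algorithm α, then (p1*, p2*) is a pure-strategy Nash equilibrium under the corresponding contract α*. -/
/-- Induced profit of seller 1 under a search algorithm `a`. -/
def Profit1 (π11 π12 : ℝ → ℝ → ℝ) (a : ℝ → ℝ → ℝ) (p1 p2 : ℝ) : ℝ :=
  a p1 p2 * π11 p1 p2 + (1 - a p1 p2) * π12 p1 p2

/-- Induced profit of seller 2 under a search algorithm `a`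
(`a` is the probability that seller 1 is searched first). -/
def Profit2 (π21 π22 : ℝ → ℝ → ℝ) (a : ℝ → ℝ → ℝ) (p1 p2 : ℝ) : ℝ :=
  a p1 p2 * π22 p1 p2 + (1 - a p1 p2) * π21 p1 p2

/-- The contract corresponding to the algorithm `α` and price pair `(p1s, p2s)`:
comply and get rank `α p1s p2s`; a unilateral deviator is ranked second. -/
noncomputable def contract (α : ℝ → ℝ → ℝ) (p1s p2s : ℝ) : ℝ → ℝ → ℝ :=
  fun p1 p2 =>
    if p1 = p1s ∧ p2 = p2s then α p1s p2s
    else if p1 = p1s then 1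
    else if p2 = p2s then 0
    else 1/2

/-- Revelation principle for contracts: a pure-strategy Nash equilibrium under a
search algorithm `α` is also a Nash equilibrium under the corresponding contract. -/
theorem revelation_principle
    (π11 π12 π21 π22 : ℝ → ℝ → ℝ)
    (hbonus1 : ∀ p1 p2, π12 p1 p2 ≤ π11 p1 p2)
    (hbonus2 : ∀ p1 p2, π22 p1 p2 ≤ π21 p1 p2)
    (α : ℝ → ℝ → ℝ) (hα : ∀ p1 p2, α p1 p2 ∈ Set.Icc (0:ℝ) 1)
    (p1s p2s : ℝ)
    (hNE1 : ∀ p1, Profit1 π11 π12 α p1 p2s ≤ Profit1 π11 π12 α p1s p2s)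
    (hNE2 : ∀ p2, Profit2 π21 π22 α p1s p2 ≤ Profit2 π21 π22 α p1s p2s) :
    (∀ p1, Profit1 π11 π12 (contract α p1s p2s) p1 p2s
        ≤ Profit1 π11 π12 (contract α p1s p2s) p1s p2s)
      ∧
    (∀ p2, Profit2 π21 π22 (contract α p1s p2s) p1s p2
        ≤ Profit2 π21 π22 (contract α p1s p2s) p1s p2s) := by
  have hstar1 : Profit1 π11 π12 (contract α p1s p2s) p1s p2s
      = Profit1 π11 π12 α p1s p2s := by
    simp [Profit1, contract]
  have hstar2 : Profit2 π21 π22 (contract α p1s p2s) p1s p2s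
      = Profit2 π21 π22 α p1s p2s := by
    simp [Profit2, contract]
  constructor
  · intro p1
    by_cases h : p1 = p1s
    · subst h; exact le_refl _
    · have hc : contract α p1s p2s p1 p2s = 0 := by
        simp [contract, h]
      have h0 : Profit1 π11 π12 (contract α p1s p2s) p1 p2s = π12 p1 p2s := by
        simp [Profit1, hc]
      have hle : π12 p1 p2s ≤ Profit1 π11 π12 α p1 p2s := by
        have ha := hα p1 p2s
        simp only [Set.mem_Icc] at ha
        have := hbonus1 p1 p2s
        unfold Profit1
        nlinarith [ha.1, ha.2]
      rw [h0, hstar1]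
      exact hle.trans (hNE1 p1)
  · intro p2
    by_cases h : p2 = p2s
    · subst h; exact le_refl _
    · have hc : contract α p1s p2s p1s p2 = 1 := by
        simp [contract, h]
      have h0 : Profit2 π21 π22 (contract α p1s p2s) p1s p2 = π22 p1s p2 := by
        simp [Profit2, hc]
      have hle : π22 p1s p2 ≤ Profit2 π21 π22 α p1s p2 := by
        have ha := hα p1s p2
        simp only [Set.mem_Icc] at ha
        have := hbonus2 p1s p2
        unfold Profit2
        nlinarith [ha.1, ha.2]
      rw [h0, hstar2]
      exact hle.trans (hNE2 p2)
end

section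
/- Deviation best responses are below 1/2 (uniform case): let A ∈ (0,1) and p1 ∈ [0,1], and define g(p) = p·(A − A²/2 + p1 − p − p1·p + p²/2) for p ∈ [0,1] (the profit of the second-ranked seller as a function of its own price). Then every maximizer p* of g on [0,1] satisfies p* < 1/2. -/
/-- Deviation best responses are below 1/2 (uniform case): every maximizer on
`[0,1]` of the second-ranked seller's profit
`g(p) = p·(A - A²/2 + p1 - p - p1·p + p²/2)` is strictly less than `1/2`. -/
theorem deviation_best_response_lt_half
    (A p1 : ℝ) (hA : A ∈ Set.Ioo (0:ℝ) 1) (hp1 : p1 ∈ Set.Icc (0:ℝ) 1) :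
    ∀ pstar ∈ Set.Icc (0:ℝ) 1,
      (∀ p ∈ Set.Icc (0:ℝ) 1,
          p * (A - A^2/2 + p1 - p - p1*p + p^2/2)
            ≤ pstar * (A - A^2/2 + p1 - pstar - p1*pstar + pstar^2/2)) →
      pstar < 1/2 := by
  intro pstar hps hmax
  by_contra h
  push_neg at h
  obtain ⟨hA0, hA1⟩ := hA
  obtain ⟨hp10, hp11⟩ := hp1
  obtain ⟨hps0, hps1⟩ := hps
  set t : ℝ := (1-A)^2/6 with ht
  have h1A : (0:ℝ) < 1 - A := by linarith
  have ht0 : 0 < t := by positivity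
  have ht1 : t ≤ 1/6 := by nlinarith
  have hpmem : pstar - t ∈ Set.Icc (0:ℝ) 1 := by
    constructor <;> nlinarith
  have key := hmax (pstar - t) hpmem
  have h2q : (0:ℝ) ≤ 2*pstar - 1 := by linarith
  have hhalf : (0:ℝ) ≤ pstar - 1/2 := by linarith
  have hq1 : (0:ℝ) ≤ 1 - pstar := by linarith
  have htt : (0:ℝ) ≤ t * t := by positivity
  nlinarith [key,
    mul_nonneg (mul_nonneg ht0.le hp10) h2q,
    mul_nonneg (mul_nonneg ht0.le hhalf) hq1,
    mul_nonneg htt (sub_nonneg.2 hp11),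
    mul_nonneg htt hps0,
    mul_nonneg htt (by linarith : (0:ℝ) ≤ 1/6 - t),
    mul_nonneg ht0.le hps0]
end
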